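/- For the linearization Y'' = 12 y(x) Y of the first Painlevé equation along a solution y with a double pole at x₁, the Wronskian of the two solutions ∂_{x₁} y(x; x₁, c₁) and ∂_{c₁} y(x; x₁, c₁) is constant in x and equals 14. -/

import Mathlib

open Filter Set Topology

/-!
For any two solutions of `Y'' = q Y` the Wronskian `u v' - u' v` has derivative
`u (q v) - (q u) v = 0`, so it is constant on each of the two intervals of the punctured
disc around the pole. Its value is therefore its limit at the pole, where the cross terms
of `Y₁ ~ 2 (x - x₁)⁻³`, `Y₁' ~ -6 (x - x₁)⁻⁴` and `Y₂ ~ (x - x₁)⁴`, `Y₂' ~ 4 (x - x₁)³`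
give `2 · 4 - (-6) · 1 = 14`.
-/

theorem hasDerivAt_wronskian_eq_zero {u u' v v' : ℝ → ℝ} {q x : ℝ}
    (hu : HasDerivAt u (u' x) x) (hu' : HasDerivAt u' (q * u x) x)
    (hv : HasDerivAt v (v' x) x) (hv' : HasDerivAt v' (q * v x) x) :
    HasDerivAt (fun t => u t * v' t - u' t * v t) 0 x :=
  ((hu.mul hv').sub (hu'.mul hv)).congr_deriv (by ring)

theorem IsOpen.eq_of_hasDerivAt_zero_of_tendsto {𝕜 G : Type*} [RCLike 𝕜]
    [NormedAddCommGroup G] [NormedSpace 𝕜 G] {f : 𝕜 → G} {s : Set 𝕜} {l : Filter 𝕜}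
    [l.NeBot] {L : G} (hs : IsOpen s) (hs' : IsPreconnected s)
    (hderiv : ∀ x ∈ s, HasDerivAt f 0 x) (hsl : s ∈ l) (hlim : Tendsto f l (𝓝 L))
    {x : 𝕜} (hx : x ∈ s) : f x = L := by
  have hconst : ∀ z ∈ s, f z = f x := fun z hz =>
    hs.is_const_of_deriv_eq_zero hs'
      (fun w hw => (hderiv w hw).differentiableAt.differentiableWithinAt)
      (fun w hw => (hderiv w hw).deriv) hz hx
  exact tendsto_nhds_unique
    (tendsto_const_nhds.congr' (eventually_of_mem hsl fun z hz => (hconst z hz).symm)) hlim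

theorem eq_of_hasDerivAt_zero_of_tendsto_nhdsNE {f : ℝ → ℝ} {a r L : ℝ}
    (hderiv : ∀ x, x ≠ a → |x - a| < r → HasDerivAt f 0 x)
    (hlim : Tendsto f (𝓝[≠] a) (𝓝 L)) {x : ℝ} (hx : x ≠ a) (hxr : |x - a| < r) :
    f x = L := by
  obtain ⟨hxl, hxu⟩ := abs_sub_lt_iff.mp hxr
  rcases hx.lt_or_gt with hlt | hgt
  · refine isOpen_Ioo.eq_of_hasDerivAt_zero_of_tendsto isPreconnected_Ioo
      (fun z hz => hderiv z hz.2.ne (abs_sub_lt_iff.mpr ⟨by linarith [hz.2], by linarith [hz.1]⟩))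
      (Ioo_mem_nhdsLT (by linarith)) (hlim.mono_left (nhdsWithin_mono _ fun z hz => ne_of_lt hz))
      (⟨by linarith, hlt⟩ : x ∈ Ioo (a - r) a)
  · refine isOpen_Ioo.eq_of_hasDerivAt_zero_of_tendsto isPreconnected_Ioo
      (fun z hz => hderiv z hz.1.ne' (abs_sub_lt_iff.mpr ⟨by linarith [hz.2], by linarith [hz.1]⟩))
      (Ioo_mem_nhdsGT (by linarith)) (hlim.mono_left (nhdsWithin_mono _ fun z hz => ne_of_gt hz))
      (⟨hgt, by linarith⟩ : x ∈ Ioo a (a + r))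

theorem tendsto_wronskian_nhdsNE {u u' v v' : ℝ → ℝ} {a A A' B B' : ℝ} {n m : ℕ}
    (hu : Tendsto (fun x => (x - a) ^ n * u x) (𝓝[≠] a) (𝓝 A))
    (hu' : Tendsto (fun x => (x - a) ^ m * u' x) (𝓝[≠] a) (𝓝 A'))
    (hv : Tendsto (fun x => v x / (x - a) ^ m) (𝓝[≠] a) (𝓝 B))
    (hv' : Tendsto (fun x => v' x / (x - a) ^ n) (𝓝[≠] a) (𝓝 B')) :
    Tendsto (fun x => u x * v' x - u' x * v x) (𝓝[≠] a) (𝓝 (A * B' - A' * B)) := by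
  refine ((hu.mul hv').sub (hu'.mul hv)).congr' ?_
  filter_upwards [self_mem_nhdsWithin] with x hx
  have hxa : x - a ≠ 0 := sub_ne_zero.mpr hx
  field_simp

theorem painleveI_wronskian_fourteen_general (x₁ r : ℝ)
    (y Y₁ Y₁' Y₂ Y₂' : ℝ → ℝ)
    (hlin₁ : ∀ x : ℝ, x ≠ x₁ → |x - x₁| < r →
      HasDerivAt Y₁ (Y₁' x) x ∧ HasDerivAt Y₁' (12 * y x * Y₁ x) x)
    (hlin₂ : ∀ x : ℝ, x ≠ x₁ → |x - x₁| < r →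
      HasDerivAt Y₂ (Y₂' x) x ∧ HasDerivAt Y₂' (12 * y x * Y₂ x) x)
    (hasym₁ : Tendsto (fun x : ℝ => (x - x₁) ^ 3 * Y₁ x) (𝓝[≠] x₁) (𝓝 2))
    (hasym₁' : Tendsto (fun x : ℝ => (x - x₁) ^ 4 * Y₁' x) (𝓝[≠] x₁) (𝓝 (-6)))
    (hasym₂ : Tendsto (fun x : ℝ => Y₂ x / (x - x₁) ^ 4) (𝓝[≠] x₁) (𝓝 1))
    (hasym₂' : Tendsto (fun x : ℝ => Y₂' x / (x - x₁) ^ 3) (𝓝[≠] x₁) (𝓝 4)) :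
    ∀ x : ℝ, x ≠ x₁ → |x - x₁| < r →
      Y₁ x * Y₂' x - Y₁' x * Y₂ x = 14 := by
  have hlim := tendsto_wronskian_nhdsNE hasym₁ hasym₁' hasym₂ hasym₂'
  norm_num at hlim
  intro x hx hxr
  refine eq_of_hasDerivAt_zero_of_tendsto_nhdsNE (fun z hz hzr => ?_) hlim hx hxr
  obtain ⟨h₁, h₁'⟩ := hlin₁ z hz hzr
  obtain ⟨h₂, h₂'⟩ := hlin₂ z hz hzr
  exact hasDerivAt_wronskian_eq_zero h₁ h₁' h₂ h₂'

/-- For the linearization `Y'' = 12 y Y` of Painlevé I along a solution `y`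
with a double pole at `x₁`, the Wronskian of the two parameter-derivative
solutions — the one behaving like `∂_{x₁}y ~ 2(x-x₁)⁻³` and the one behaving
like `∂_{c₁}y ~ (x-x₁)⁴` — is constant in `x` and equals `14`. -/
theorem painleveI_wronskian_fourteen (x₁ r : ℝ) (hr : 0 < r)
    (y y' Y₁ Y₁' Y₂ Y₂' : ℝ → ℝ)
    (hode : ∀ x : ℝ, x ≠ x₁ → |x - x₁| < r →
      HasDerivAt y (y' x) x ∧ HasDerivAt y' (6 * (y x) ^ 2 - x) x)
    (hpole : Tendsto (fun x : ℝ => (x - x₁) ^ 2 * y x) (𝓝[≠] x₁) (𝓝 1))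
    (hlin₁ : ∀ x : ℝ, x ≠ x₁ → |x - x₁| < r →
      HasDerivAt Y₁ (Y₁' x) x ∧ HasDerivAt Y₁' (12 * y x * Y₁ x) x)
    (hlin₂ : ∀ x : ℝ, x ≠ x₁ → |x - x₁| < r →
      HasDerivAt Y₂ (Y₂' x) x ∧ HasDerivAt Y₂' (12 * y x * Y₂ x) x)
    (hasym₁ : Tendsto (fun x : ℝ => (x - x₁) ^ 3 * Y₁ x) (𝓝[≠] x₁) (𝓝 2))
    (hasym₁' : Tendsto (fun x : ℝ => (x - x₁) ^ 4 * Y₁' x) (𝓝[≠] x₁) (𝓝 (-6)))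
    (hasym₂ : Tendsto (fun x : ℝ => Y₂ x / (x - x₁) ^ 4) (𝓝[≠] x₁) (𝓝 1))
    (hasym₂' : Tendsto (fun x : ℝ => Y₂' x / (x - x₁) ^ 3) (𝓝[≠] x₁) (𝓝 4)) :
    ∀ x : ℝ, x ≠ x₁ → |x - x₁| < r →
      Y₁ x * Y₂' x - Y₁' x * Y₂ x = 14 :=
  painleveI_wronskian_fourteen_general x₁ r y Y₁ Y₁' Y₂ Y₂' hlin₁ hlin₂ hasym₁ hasym₁' hasym₂
    hasym₂'
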